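/- Fix n ≥ 1 and a subset S = {s_1, ..., s_k} of {1, ..., n-1} with s_1 < ... < s_k, and set s_0 = 0 and s_{k+1} = n. Then the set of permutations π of {1, ..., n} with A(π) ⊆ S is in bijection with the Cartesian product CC_n(S) = [0,k]^{s_{k+1}-s_k} × [0,k-1]^{s_k-s_{k-1}} × ... × [0,1]^{s_2-s_1} × [0,0]^{s_1-s_0}; in particular the two sets have the same cardinality. -/

import Mathlib

/-!
Deleting the largest letter `m + 1` from the one-line word of a permutation of `{1, …, m + 1}`
whose ascent bottoms lie in `S` leaves such a word on `{1, …, m}`. Conversely, `m + 1` can be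
inserted into such a word at the front or directly after any letter in `S`, since the letter
before `m + 1` is the only new ascent bottom. So there are `∏_{m < n} (#(S ∩ [1, m]) + 1)` such
permutations. As `#(S ∩ [1, m]) = r` exactly when `s_r ≤ m < s_{r+1}`, this product equals
`∏_{r ≤ k} (r + 1) ^ (s_{r+1} - s_r) = #CC_n(S)`.
-/

/-- The `i`-th value (1-indexed) of the permutation `π` of `{1, …, n}`, i.e. `a_i ∈ {1, …, n}`.
For `i` outside `{1, …, n}` a junk value is returned. -/
def pval {n : ℕ} (π : Equiv.Perm (Fin n)) (i : ℕ) : ℕ :=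
  if h : i - 1 < n then (π ⟨i - 1, h⟩ : ℕ) + 1 else 0

/-- The set of ascent bottoms `A(π) = { a_i : i ∈ {1, …, n-1}, a_i < a_{i+1} }`. -/
def ascentBottoms {n : ℕ} (π : Equiv.Perm (Fin n)) : Finset ℕ :=
  ((Finset.Icc 1 (n - 1)).filter fun i => pval π i < pval π (i + 1)).image (pval π)

/-- For `S = {s_1 < s_2 < ⋯ < s_k} ⊆ {1, …, n-1}`, `sVal n S r` is `s_r`, with the
conventions `s_0 = 0` and `s_{k+1} = n`. -/
def sVal (n : ℕ) (S : Finset ℕ) (r : ℕ) : ℕ :=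
  if r = 0 then 0 else if r = S.card + 1 then n else (S.sort (· ≤ ·)).getD (r - 1) 0

/-- The set of construction choices
`CC_n(S) = [0,k]^(s_{k+1}-s_k) × [0,k-1]^(s_k-s_{k-1}) × ⋯ × [0,0]^(s_1-s_0)`, encoded as
the dependent Cartesian product over `r ∈ {1, …, k+1}` of `(s_r - s_{r-1})` many copies of
`[0, r-1]` (the factor indexed by `r : Fin (k+1)` is `[0,r]^(s_{r+1}-s_r)`). -/
def CC (n : ℕ) (S : Finset ℕ) : Type :=
  (r : Fin (S.card + 1)) → Fin (sVal n S ((r : ℕ) + 1) - sVal n S (r : ℕ)) → Fin ((r : ℕ) + 1)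

open Finset

theorem List.insertIdx_eq_take_append_cons_drop {α : Type*} {l : List α} {i : ℕ}
    (h : i ≤ l.length) (a : α) : l.insertIdx i a = l.take i ++ a :: l.drop i := by
  have := List.modifyTailIdx_add (List.cons a) 0 (l.take i) (l.drop i)
  rwa [List.take_append_drop, List.length_take_of_le h, Nat.add_zero] at this

theorem List.erase_append_cons_of_notMem {α : Type*} [BEq α] [LawfulBEq α] {a : α}
    {l₁ : List α} (h : a ∉ l₁) (l₂ : List α) : (l₁ ++ a :: l₂).erase a = l₁ ++ l₂ := by
  rw [List.erase_append_right _ h, List.erase_cons_head]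

section AscentBottoms

variable {α : Type*}

def AscentBottomsIn [LT α] (S : Finset α) (w : List α) : Prop :=
  w.IsChain fun a b => a < b → a ∈ S

instance [LT α] [DecidableLT α] [DecidableEq α] (S : Finset α) (w : List α) :
    Decidable (AscentBottomsIn S w) :=
  inferInstanceAs (Decidable (w.IsChain _))

theorem ascentBottomsIn_append_cons_iff [Preorder α] {S : Finset α} {a : α} {l₁ l₂ : List α}
    (h : ∀ x ∈ l₁ ++ l₂, x < a) :
    AscentBottomsIn S (l₁ ++ a :: l₂) ↔
      AscentBottomsIn S (l₁ ++ l₂) ∧ ∀ x ∈ l₁.getLast?, x ∈ S := by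
  have h₁ : ∀ x ∈ l₁.getLast?, x < a := fun x hx => h x (by simp [List.mem_of_mem_getLast? hx])
  have h₂ : ∀ y ∈ l₂.head?, ¬a < y := fun y hy =>
    lt_asymm (h y (by simp [List.mem_of_mem_head? hy]))
  simp only [AscentBottomsIn, List.isChain_append, List.isChain_cons, Option.mem_def,
    List.head?_cons, Option.some.injEq, forall_eq']
  constructor
  · rintro ⟨c₁, ⟨-, c₂⟩, hS⟩
    exact ⟨⟨c₁, c₂, fun x hx _ _ _ => hS x hx (h₁ x hx)⟩, fun x hx => hS x hx (h₁ x hx)⟩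
  · rintro ⟨⟨c₁, c₂, -⟩, hS⟩
    exact ⟨c₁, ⟨fun y hy hay => absurd hay (h₂ y hy), c₂⟩, fun x hx _ => hS x hx⟩

def admissiblePositions [DecidableEq α] (S : Finset α) (l : List α) : Finset ℕ :=
  {i ∈ range (l.length + 1) | ∀ x ∈ (l.take i).getLast?, x ∈ S}

theorem card_admissiblePositions [DecidableEq α] (S : Finset α) (l : List α) :
    #(admissiblePositions S l) = l.countP (· ∈ S) + 1 := by
  induction l using List.reverseRecOn with
  | nil => simp [admissiblePositions]
  | append_singleton l b ih =>
    have hprefix : {i ∈ range (l.length + 1) | ∀ x ∈ ((l ++ [b]).take i).getLast?, x ∈ S} =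
        admissiblePositions S l :=
      filter_congr fun i hi => by
        rw [List.take_append_of_le_length (Nat.lt_succ_iff.1 (mem_range.1 hi))]
    have hlast : ((l ++ [b]).take (l.length + 1)).getLast? = some b := by
      rw [show l.length + 1 = (l ++ [b]).length by simp, List.take_length, List.getLast?_concat]
    rw [admissiblePositions, List.length_append, List.length_singleton, range_add_one,
      filter_insert, hprefix, hlast, List.countP_append, List.countP_singleton]
    by_cases hb : b ∈ S
    · rw [if_pos (by simpa using hb), card_insert_of_notMem (by simp [admissiblePositions]), ih]
      simp [hb]
    · rw [if_neg (by simpa using hb), ih]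
      simp [hb]

end AscentBottoms

theorem countP_range'_mem (S : Finset ℕ) (m : ℕ) :
    (List.range' 1 m).countP (· ∈ S) = #(S ∩ Icc 1 m) := by
  rw [inter_comm, ← filter_mem_eq_inter, Nat.Icc_eq_range', card_def, filter_val]
  simp [List.countP_eq_length_filter]

section AdmissibleWords

variable {S : Finset ℕ} {m : ℕ}

def admissibleWords (S : Finset ℕ) (m : ℕ) : Finset (List ℕ) :=
  {w ∈ (List.range' 1 m).permutations.toFinset | AscentBottomsIn S w}

theorem mem_admissibleWords {w : List ℕ} :
    w ∈ admissibleWords S m ↔ w.Perm (List.range' 1 m) ∧ AscentBottomsIn S w := by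
  simp [admissibleWords, List.mem_permutations]

theorem lt_of_mem_admissibleWords {w : List ℕ} (hw : w ∈ admissibleWords S m) {x : ℕ}
    (hx : x ∈ w) : x < m + 1 := by
  have := (mem_admissibleWords.1 hw).1.subset hx
  rw [List.mem_range'_1] at this
  omega

theorem mem_admissibleWords_succ_iff {w : List ℕ} :
    w ∈ admissibleWords S (m + 1) ↔ ∃ l₁ l₂, l₁ ++ l₂ ∈ admissibleWords S m ∧
      w = l₁ ++ (m + 1) :: l₂ ∧ ∀ x ∈ l₁.getLast?, x ∈ S := by
  have hrange : List.range' 1 (m + 1) = List.range' 1 m ++ [m + 1] := by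
    rw [List.range'_concat]; ac_rfl
  constructor
  · intro hw
    obtain ⟨hperm, hasc⟩ := mem_admissibleWords.1 hw
    obtain ⟨l₁, l₂, rfl⟩ := List.append_of_mem (a := m + 1) (hperm.mem_iff.2 (by simp))
    have hperm' : (l₁ ++ l₂).Perm (List.range' 1 m) :=
      ((List.perm_middle.symm.trans hperm).trans
        (hrange ▸ List.perm_append_singleton _ _)).cons_inv
    have hlt : ∀ x ∈ l₁ ++ l₂, x < m + 1 := fun x hx => by
      have := hperm'.subset hx; rw [List.mem_range'_1] at this; omega
    obtain ⟨hasc', hlast⟩ := (ascentBottomsIn_append_cons_iff hlt).1 hasc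
    exact ⟨l₁, l₂, mem_admissibleWords.2 ⟨hperm', hasc'⟩, rfl, hlast⟩
  · rintro ⟨l₁, l₂, hw', rfl, hlast⟩
    obtain ⟨hperm', hasc'⟩ := mem_admissibleWords.1 hw'
    refine mem_admissibleWords.2 ⟨?_, (ascentBottomsIn_append_cons_iff
      fun x hx => lt_of_mem_admissibleWords hw' hx).2 ⟨hasc', hlast⟩⟩
    rw [hrange]
    exact List.perm_middle.trans ((hperm'.cons _).trans (List.perm_append_singleton _ _).symm)

theorem erase_append_succ_cons {l₁ l₂ : List ℕ} (h : l₁ ++ l₂ ∈ admissibleWords S m) :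
    (l₁ ++ (m + 1) :: l₂).erase (m + 1) = l₁ ++ l₂ :=
  List.erase_append_cons_of_notMem
    (fun h' => (lt_of_mem_admissibleWords h (List.mem_append_left l₂ h')).false) l₂

theorem erase_mem_admissibleWords {w : List ℕ} (hw : w ∈ admissibleWords S (m + 1)) :
    w.erase (m + 1) ∈ admissibleWords S m := by
  obtain ⟨l₁, l₂, h12, rfl, -⟩ := mem_admissibleWords_succ_iff.1 hw
  rwa [erase_append_succ_cons h12]

theorem filter_erase_admissibleWords_eq_image {w' : List ℕ} (hw' : w' ∈ admissibleWords S m) :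
    {w ∈ admissibleWords S (m + 1) | w.erase (m + 1) = w'} =
      (admissiblePositions S w').image fun i => w'.insertIdx i (m + 1) := by
  ext w
  simp only [mem_filter, mem_admissibleWords_succ_iff, mem_image, admissiblePositions, mem_range]
  constructor
  · rintro ⟨⟨l₁, l₂, h12, rfl, hlast⟩, rfl⟩
    rw [erase_append_succ_cons h12]
    refine ⟨l₁.length, ⟨by simp, by rwa [List.take_left]⟩, ?_⟩
    rw [List.insertIdx_eq_take_append_cons_drop (by simp), List.take_left, List.drop_left]
  · rintro ⟨i, ⟨hi, hlast⟩, rfl⟩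
    have hsplit := List.take_append_drop i w'
    have hl₁ : m + 1 ∉ w'.take i := fun h =>
      (lt_of_mem_admissibleWords hw' (List.mem_of_mem_take h)).false
    rw [List.insertIdx_eq_take_append_cons_drop (by omega), List.erase_append_cons_of_notMem hl₁,
      hsplit]
    exact ⟨⟨w'.take i, w'.drop i, by rwa [hsplit], rfl, hlast⟩, rfl⟩

theorem card_admissibleWords_succ (S : Finset ℕ) (m : ℕ) :
    #(admissibleWords S (m + 1)) = #(admissibleWords S m) * (#(S ∩ Icc 1 m) + 1) := by
  have hmaps : Set.MapsTo (fun w : List ℕ => w.erase (m + 1))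
      (admissibleWords S (m + 1) : Set (List ℕ)) (admissibleWords S m) :=
    fun _ hw => erase_mem_admissibleWords hw
  rw [card_eq_sum_card_fiberwise hmaps, ← smul_eq_mul, ← sum_const]
  refine sum_congr rfl fun w' hw' => ?_
  have hinj : Set.InjOn (fun i => w'.insertIdx i (m + 1)) (admissiblePositions S w') :=
    (List.injOn_insertIdx_index_of_notMem w' _ fun h =>
      (lt_of_mem_admissibleWords hw' h).false).mono fun i hi => by
        simp only [admissiblePositions, coe_filter, mem_range] at hi; exact Nat.lt_succ_iff.1 hi.1
  rw [filter_erase_admissibleWords_eq_image hw', card_image_of_injOn hinj,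
    card_admissiblePositions, (mem_admissibleWords.1 hw').1.countP_eq, countP_range'_mem]

theorem card_admissibleWords (S : Finset ℕ) (m : ℕ) :
    #(admissibleWords S m) = ∏ i ∈ range m, (#(S ∩ Icc 1 i) + 1) := by
  induction m with
  | zero => simp [admissibleWords, AscentBottomsIn, filter_singleton]
  | succ m ih => rw [card_admissibleWords_succ, ih, prod_range_succ]

end AdmissibleWords

section OneLineWord

variable {n : ℕ}

def oneLineWord (π : Equiv.Perm (Fin n)) : List ℕ :=
  List.ofFn fun i => (π i : ℕ) + 1

theorem oneLineWord_injective : Function.Injective (@oneLineWord n) := fun _ _ h =>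
  Equiv.ext fun i => Fin.ext (Nat.add_right_cancel (congrFun (List.ofFn_injective h) i))

theorem oneLineWord_perm_range' (π : Equiv.Perm (Fin n)) :
    (oneLineWord π).Perm (List.range' 1 n) := by
  refine (List.perm_ext_iff_of_nodup ?_ List.nodup_range').2 fun a => ?_
  · exact List.nodup_ofFn.2 fun i j h => π.injective (Fin.ext (Nat.add_right_cancel h))
  · simp only [oneLineWord, List.mem_ofFn, List.mem_range'_1]
    constructor
    · rintro ⟨i, rfl⟩; omega
    · intro ha
      exact ⟨π.symm ⟨a - 1, by omega⟩, by simp; omega⟩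

theorem image_oneLineWord_univ :
    univ.image (@oneLineWord n) = (List.range' 1 n).permutations.toFinset := by
  refine eq_of_subset_of_card_le (fun w hw => ?_) ?_
  · obtain ⟨π, -, rfl⟩ := mem_image.1 hw
    simpa [List.mem_permutations] using oneLineWord_perm_range' π
  · rw [card_image_of_injective _ oneLineWord_injective, card_univ, Fintype.card_perm,
      Fintype.card_fin, List.toFinset_card_of_nodup (List.nodup_permutations _ List.nodup_range'),
      List.length_permutations, List.length_range']

theorem pval_succ (π : Equiv.Perm (Fin n)) {j : ℕ} (hj : j < n) :
    pval π (j + 1) = π ⟨j, hj⟩ + 1 := by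
  simp [pval, hj]

theorem ascentBottoms_subset_iff (π : Equiv.Perm (Fin n)) (S : Finset ℕ) :
    ascentBottoms π ⊆ S ↔ AscentBottomsIn S (oneLineWord π) := by
  simp only [ascentBottoms, image_subset_iff, mem_filter, mem_Icc, and_imp, AscentBottomsIn,
    oneLineWord, List.isChain_ofFn]
  constructor
  · intro h j hj
    simpa only [pval_succ π (Nat.lt_of_succ_lt hj), pval_succ π hj] using
      h (j + 1) (by omega) (by omega)
  · intro h i hi₁ hi₂
    obtain ⟨j, rfl⟩ := Nat.exists_eq_add_of_le' hi₁
    rw [pval_succ π (by omega), pval_succ π (by omega)]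
    exact h j (by omega)

theorem card_ascentBottoms_subset (S : Finset ℕ) :
    Nat.card {π : Equiv.Perm (Fin n) // ascentBottoms π ⊆ S} = #(admissibleWords S n) := by
  rw [Nat.card_eq_fintype_card, Fintype.card_subtype, admissibleWords, ← image_oneLineWord_univ,
    filter_image, card_image_of_injective _ oneLineWord_injective]
  simp only [ascentBottoms_subset_iff]

end OneLineWord

section sVal

variable {n : ℕ} {S : Finset ℕ}

theorem sVal_succ_eq_getElem {j : ℕ} (hj : j < #S) :
    sVal n S (j + 1) = (S.sort (· ≤ ·))[j]'(by rwa [length_sort]) := by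
  rw [sVal, if_neg (by omega), if_neg (by omega), Nat.add_sub_cancel, List.getD_eq_getElem]

theorem sVal_le_sVal_succ (hS : ∀ s ∈ S, s ≤ n) {j : ℕ} (hj : j ≤ #S) :
    sVal n S j ≤ sVal n S (j + 1) := by
  obtain _ | j := j
  · simp [sVal]
  rw [sVal_succ_eq_getElem hj]
  rcases hj.lt_or_eq with hjk | hjk
  · rw [sVal_succ_eq_getElem hjk, (sortedLT_sort S).getElem_le_getElem_iff]; omega
  · simpa [sVal, hjk] using hS _ ((mem_sort _).1 (List.getElem_mem _))

theorem card_inter_Icc_eq (h₀ : 0 ∉ S) {j m : ℕ} (hj : j ≤ #S) (h₁ : sVal n S j ≤ m)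
    (h₂ : m < sVal n S (j + 1)) : #(S ∩ Icc 1 m) = j := by
  set L := S.sort (· ≤ ·)
  have hL : L.SortedLT := sortedLT_sort S
  have hlen : L.length = #S := length_sort _
  have hkey : ∀ i (hi : i < L.length), L[i] ≤ m ↔ i < j := fun i hi => by
    constructor
    · intro hm
      by_contra! hij
      have hLj : L[j] ≤ L[i] := hL.getElem_le_getElem_iff.2 hij
      rw [sVal_succ_eq_getElem (by omega)] at h₂
      exact (hLj.trans_lt (hm.trans_lt h₂)).false
    · intro hij
      obtain ⟨j, rfl⟩ := Nat.exists_eq_add_of_lt hij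
      have hLj : L[i] ≤ L[i + j] := hL.getElem_le_getElem_iff.2 (by omega)
      rw [sVal_succ_eq_getElem (by omega)] at h₁
      exact hLj.trans h₁
  have hset : S ∩ Icc 1 m = (L.take j).toFinset := by
    ext x
    simp only [mem_inter, mem_Icc, List.mem_toFinset, List.mem_take_iff_getElem]
    rw [← mem_sort (· ≤ ·), List.mem_iff_getElem]
    constructor
    · rintro ⟨⟨i, hi, rfl⟩, -, hm⟩
      exact ⟨i, by have := (hkey i hi).1 hm; omega, rfl⟩
    · rintro ⟨i, hi, rfl⟩
      have hmem : L[i] ∈ S := (mem_sort _).1 (List.getElem_mem _)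
      refine ⟨⟨i, _, rfl⟩, Nat.one_le_iff_ne_zero.2 fun h => h₀ (h ▸ hmem), (hkey i _).2 ?_⟩
      omega
  rw [hset, List.toFinset_card_of_nodup (hL.nodup.sublist (List.take_sublist _ _)),
    List.length_take]
  omega

theorem prod_range_card_inter_Icc (h₀ : 0 ∉ S) (hS : ∀ s ∈ S, s ≤ n) :
    ∏ m ∈ range n, (#(S ∩ Icc 1 m) + 1) =
      ∏ r ∈ range (#S + 1), (r + 1) ^ (sVal n S (r + 1) - sVal n S r) := by
  have key : ∀ j ≤ #S + 1, ∏ m ∈ range (sVal n S j), (#(S ∩ Icc 1 m) + 1) =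
      ∏ r ∈ range j, (r + 1) ^ (sVal n S (r + 1) - sVal n S r) := by
    intro j hj
    induction j with
    | zero => simp [sVal]
    | succ j ih =>
      have hj' : j ≤ #S := by omega
      have hstep : ∏ m ∈ Ico (sVal n S j) (sVal n S (j + 1)), (#(S ∩ Icc 1 m) + 1) =
          (j + 1) ^ (sVal n S (j + 1) - sVal n S j) := by
        rw [prod_congr rfl fun m hm => by
          rw [card_inter_Icc_eq h₀ hj' (mem_Ico.1 hm).1 (mem_Ico.1 hm).2], prod_const, Nat.card_Ico]
      rw [← prod_range_mul_prod_Ico _ (sVal_le_sVal_succ hS hj'), ih (by omega), hstep,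
        prod_range_succ]
  simpa [sVal] using key (#S + 1) le_rfl

end sVal

instance (n : ℕ) (S : Finset ℕ) : Finite (CC n S) := Pi.finite

theorem card_CC (n : ℕ) (S : Finset ℕ) :
    Nat.card (CC n S) = ∏ r ∈ range (#S + 1), (r + 1) ^ (sVal n S (r + 1) - sVal n S r) := by
  rw [CC, Nat.card_pi, ← Fin.prod_univ_eq_prod_range]
  simp

theorem ascentBottoms_subset_equiv_constructionChoices_general (n : ℕ) (S : Finset ℕ)
    (hS : S ⊆ Finset.Icc 1 (n - 1)) :
    Nonempty ({π : Equiv.Perm (Fin n) // ascentBottoms π ⊆ S} ≃ CC n S) ∧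
      Nat.card {π : Equiv.Perm (Fin n) // ascentBottoms π ⊆ S} = Nat.card (CC n S) := by
  have h₀ : 0 ∉ S := fun h => by simpa using hS h
  have hle : ∀ s ∈ S, s ≤ n := fun s hs => by have := mem_Icc.1 (hS hs); omega
  have hcard : Nat.card {π : Equiv.Perm (Fin n) // ascentBottoms π ⊆ S} = Nat.card (CC n S) := by
    rw [card_ascentBottoms_subset, card_admissibleWords, prod_range_card_inter_Icc h₀ hle,
      card_CC]
  exact ⟨Finite.card_eq.1 hcard, hcard⟩

/-- For `S = {s_1 < ⋯ < s_k} ⊆ {1, …, n-1}` (with `s_0 = 0`, `s_{k+1} = n`), the set of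
permutations `π` of `{1, …, n}` with `A(π) ⊆ S` is in bijection with
`CC_n(S) = [0,k]^(s_{k+1}-s_k) × ⋯ × [0,0]^(s_1-s_0)`; in particular the two sets have
the same cardinality. -/
theorem ascentBottoms_subset_equiv_constructionChoices (n : ℕ) (hn : 1 ≤ n) (S : Finset ℕ)
    (hS : S ⊆ Finset.Icc 1 (n - 1)) :
    Nonempty ({π : Equiv.Perm (Fin n) // ascentBottoms π ⊆ S} ≃ CC n S) ∧
      Nat.card {π : Equiv.Perm (Fin n) // ascentBottoms π ⊆ S} = Nat.card (CC n S) :=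
  ascentBottoms_subset_equiv_constructionChoices_general n S hS
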